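/- Let h be holomorphic on {Re z ≥ 0}, of exponential type (|h(z)| ≤ C e^{A|z|} for some A, C), bounded by c₁ on the imaginary axis, and suppose h vanishes on a strictly increasing sequence (b_k) of positive reals with b_{k+1} − b_k ≥ γ > 0 and b_k/k → 1/2 as k → ∞ (so the sequence has density 2). If additionally limsup_{|y|→∞} log|h(iy)|/|y| < 2π, then h vanishes identically on {Re z ≥ 0}. -/

import Mathlib

/-
Multiplying by `exp (-A z)` makes `h` bounded on the positive real axis, so by
Phragmén–Lindelöf `g z = exp (-A z) h z` is bounded by `c₁` on the closed right half-plane.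
Dividing a bounded function by the Blaschke factor `(z - β) / (z + β)` at one of its zeros
`β > 0` keeps it bounded by the same constant (Phragmén–Lindelöf again: the factor has modulus
one on the imaginary axis). Hence `|g z| ≤ c₁ ∏_{k<n} |z - b_k| / |z + b_k|` for every `n`.
Since `b_k ~ k / 2`, the Blaschke sum `∑ b_k Re z / |z + b_k|²` diverges and the products
tend to `0` when `Re z > 0`; continuity gives the boundary.
-/

open Complex Filter Topology Set Asymptotics

section HalfPlane

variable {E : Type*} [NormedAddCommGroup E] [NormedSpace ℂ E]

lemma diffContOnCl_of_differentiableOn_re_nonneg {f : ℂ → E}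
    (hf : DifferentiableOn ℂ f {z | 0 ≤ z.re}) : DiffContOnCl ℂ f {z | 0 < z.re} :=
  DifferentiableOn.diffContOnCl (by rwa [closure_setOfPred_lt_re])

theorem norm_cexp_neg_mul_smul_le_of_exponential_type {f : ℂ → E} {A C M : ℝ}
    (hd : DifferentiableOn ℂ f {z | 0 ≤ z.re})
    (htype : ∀ z : ℂ, 0 ≤ z.re → ‖f z‖ ≤ C * Real.exp (A * ‖z‖))
    (him : ∀ y : ℝ, ‖f (I * y)‖ ≤ M) {z : ℂ} (hz : 0 ≤ z.re) :
    ‖cexp (-A * z) • f z‖ ≤ M := by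
  have hC : 0 ≤ C := by
    simpa using (norm_nonneg _).trans (htype 0 le_rfl)
  have hnorm : ∀ w : ℂ, ‖cexp (-A * w) • f w‖ = Real.exp (-A * w.re) * ‖f w‖ := fun w => by
    simp [norm_smul, Complex.norm_exp]
  have hgd : DifferentiableOn ℂ (fun w => cexp (-A * w) • f w) {w | 0 ≤ w.re} :=
    (by fun_prop : Differentiable ℂ fun w : ℂ => cexp (-A * w)).differentiableOn.smul hd
  refine PhragmenLindelof.right_half_plane_of_bounded_on_real
    (diffContOnCl_of_differentiableOn_re_nonneg hgd) ⟨1, one_lt_two, 2 * |A|, ?_⟩ ?_ ?_ hz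
  · refine IsBigO.of_bound C (eventually_inf_principal.2 (Eventually.of_forall fun w hw => ?_))
    have hre : -A * w.re + A * ‖w‖ ≤ 2 * |A| * ‖w‖ := by
      have := abs_le.1 (abs_re_le_norm w)
      nlinarith [neg_abs_le A, le_abs_self A, norm_nonneg w]
    calc ‖cexp (-A * w) • f w‖ = Real.exp (-A * w.re) * ‖f w‖ := hnorm w
      _ ≤ Real.exp (-A * w.re) * (C * Real.exp (A * ‖w‖)) := by
        gcongr; exact htype w (le_of_lt hw)
      _ = C * Real.exp (-A * w.re + A * ‖w‖) := by rw [Real.exp_add]; ring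
      _ ≤ C * ‖Real.exp (2 * |A| * ‖w‖ ^ (1 : ℝ))‖ := by
        rw [Real.rpow_one, Real.norm_of_nonneg (Real.exp_pos _).le]; gcongr
  · refine isBoundedUnder_of_eventually_le (a := C) (eventually_ge_atTop 0 |>.mono fun x hx => ?_)
    have := htype x (by simpa using hx)
    rw [norm_real, Real.norm_of_nonneg hx] at this
    calc ‖cexp (-A * x) • f x‖ = Real.exp (-A * x) * ‖f x‖ := by simpa using hnorm x
      _ ≤ Real.exp (-A * x) * (C * Real.exp (A * x)) := by gcongr
      _ = C := by rw [mul_left_comm, ← Real.exp_add]; simp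
  · intro y
    rw [hnorm, mul_comm (y : ℂ)]
    simpa using him y

end HalfPlane

lemma re_nonneg_mem_nhds_ofReal {β : ℝ} (hβ : 0 < β) : {z : ℂ | 0 ≤ z.re} ∈ 𝓝 (β : ℂ) :=
  mem_of_superset ((isOpen_lt continuous_const continuous_re).mem_nhds (by simpa using hβ))
    fun w (hw : 0 < w.re) => hw.le

lemma sq_norm_sub_ofReal (z : ℂ) (β : ℝ) : ‖z - β‖ ^ 2 = ‖z + β‖ ^ 2 - 4 * β * z.re := by
  simp only [Complex.sq_norm, normSq_apply, sub_re, sub_im, add_re, add_im, ofReal_re, ofReal_im]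
  ring

/-- `g` divided by the Blaschke factor `(z - β) / (z + β)` of the right half-plane; the
singularity at `β` is removed through `dslope`. -/
noncomputable def divBlaschkeFactor (g : ℂ → ℂ) (β : ℂ) (z : ℂ) : ℂ :=
  (z + β) * dslope g β z

section Blaschke

variable {g : ℂ → ℂ} {β : ℂ}

lemma sub_mul_divBlaschkeFactor (hgβ : g β = 0) (z : ℂ) :
    (z - β) * divBlaschkeFactor g β z = (z + β) * g z := by
  have := sub_smul_dslope g β z
  rw [smul_eq_mul, hgβ, sub_zero] at this
  rw [divBlaschkeFactor, mul_left_comm, this]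

lemma divBlaschkeFactor_eq_zero (hgβ : g β = 0) {w : ℂ} (hw : g w = 0) (hwβ : w ≠ β) :
    divBlaschkeFactor g β w = 0 := by
  have := sub_mul_divBlaschkeFactor hgβ w
  rw [hw, mul_zero] at this
  exact (mul_eq_zero.1 this).resolve_left (sub_ne_zero.2 hwβ)

lemma DifferentiableOn.divBlaschkeFactor {s : Set ℂ} (hd : DifferentiableOn ℂ g s)
    (hs : s ∈ 𝓝 β) : DifferentiableOn ℂ (divBlaschkeFactor g β) s :=
  (differentiableOn_id.add_const β).mul ((differentiableOn_dslope hs).2 hd)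

end Blaschke

section RealZero

variable {g : ℂ → ℂ} {β : ℝ}

lemma norm_sub_mul_norm_divBlaschkeFactor (hgβ : g β = 0) (z : ℂ) :
    ‖z - β‖ * ‖divBlaschkeFactor g β z‖ = ‖z + β‖ * ‖g z‖ := by
  simpa only [norm_mul] using congrArg norm (sub_mul_divBlaschkeFactor hgβ z)

lemma norm_add_ofReal_ne_zero {z : ℂ} (hz : 0 ≤ z.re) (hβ : 0 < β) : ‖z + β‖ ≠ 0 := by
  refine norm_ne_zero_iff.2 fun h0 => ?_
  have := congrArg re h0
  simp only [add_re, ofReal_re, zero_re] at this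
  linarith

theorem norm_divBlaschkeFactor_le {M : ℝ} (hβ : 0 < β) (hd : DifferentiableOn ℂ g {z | 0 ≤ z.re})
    (hM : ∀ z : ℂ, 0 ≤ z.re → ‖g z‖ ≤ M) (hgβ : g β = 0) {z : ℂ} (hz : 0 ≤ z.re) :
    ‖divBlaschkeFactor g β z‖ ≤ M := by
  set G := divBlaschkeFactor g β
  have hGd : DifferentiableOn ℂ G {z | 0 ≤ z.re} :=
    hd.divBlaschkeFactor (re_nonneg_mem_nhds_ofReal hβ)
  have hfar : ∀ w : ℂ, 0 ≤ w.re → 2 * β ≤ ‖w‖ → ‖G w‖ ≤ 3 * M := by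
    intro w hw hwβ
    have hsub : ‖w‖ - β ≤ ‖w - β‖ := by simpa [abs_of_pos hβ] using norm_sub_norm_le w β
    have hadd : ‖w + β‖ ≤ ‖w‖ + β := by simpa [abs_of_pos hβ] using norm_add_le w β
    have hgw := hM w hw
    have hM0 : 0 ≤ M := (norm_nonneg _).trans hgw
    have key := norm_sub_mul_norm_divBlaschkeFactor hgβ w
    nlinarith [norm_nonneg (G w), norm_nonneg (g w), mul_le_mul hadd hgw (norm_nonneg _)
      (by positivity)]
  refine PhragmenLindelof.right_half_plane_of_bounded_on_real
    (diffContOnCl_of_differentiableOn_re_nonneg hGd) ⟨0, two_pos, 0, ?_⟩ ?_ ?_ hz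
  · refine IsBigO.of_bound (3 * M) (eventually_inf_principal.2 ?_)
    filter_upwards [eventually_cobounded_le_norm (2 * β)] with w hw hre
    simpa using hfar w (le_of_lt hre) hw
  · refine isBoundedUnder_of_eventually_le (a := 3 * M) ?_
    filter_upwards [eventually_ge_atTop (2 * β)] with x hx
    exact hfar x (by simpa using (hβ.trans_le (by linarith : β ≤ x)).le)
      (by rwa [norm_real, Real.norm_of_nonneg (by linarith)])
  · intro y
    have hre : ((y : ℂ) * I).re = 0 := by simp
    have heq : ‖(y : ℂ) * I - β‖ = ‖(y : ℂ) * I + β‖ := by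
      rw [← sq_eq_sq₀ (norm_nonneg _) (norm_nonneg _), sq_norm_sub_ofReal, hre]
      ring
    have key := norm_sub_mul_norm_divBlaschkeFactor hgβ ((y : ℂ) * I)
    rw [heq] at key
    rw [mul_left_cancel₀ (norm_add_ofReal_ne_zero hre.ge hβ) key]
    exact hM _ hre.ge

end RealZero

theorem norm_le_mul_prod_of_forall_eq_zero {g : ℂ → ℂ} {M : ℝ} (s : Finset ℝ)
    (hs : ∀ β ∈ s, 0 < β ∧ g β = 0) (hd : DifferentiableOn ℂ g {z | 0 ≤ z.re})
    (hM : ∀ z : ℂ, 0 ≤ z.re → ‖g z‖ ≤ M) {z : ℂ} (hz : 0 ≤ z.re) :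
    ‖g z‖ ≤ M * ∏ β ∈ s, ‖z - β‖ / ‖z + β‖ := by
  induction s using Finset.induction_on generalizing g with
  | empty => simpa using hM z hz
  | insert β s hβs ih =>
    obtain ⟨hβ, hgβ⟩ := hs β (Finset.mem_insert_self β s)
    have hG := ih (g := divBlaschkeFactor g β)
      (fun w hw => ⟨(hs w (Finset.mem_insert_of_mem hw)).1,
        divBlaschkeFactor_eq_zero hgβ (hs w (Finset.mem_insert_of_mem hw)).2
          (by exact_mod_cast ne_of_mem_of_not_mem hw hβs)⟩)
      (hd.divBlaschkeFactor (re_nonneg_mem_nhds_ofReal hβ))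
      (fun w hw => norm_divBlaschkeFactor_le hβ hd hM hgβ hw)
    have hne := norm_add_ofReal_ne_zero hz hβ
    have hgz : ‖g z‖ = ‖z - β‖ / ‖z + β‖ * ‖divBlaschkeFactor g β z‖ := by
      rw [div_mul_eq_mul_div, norm_sub_mul_norm_divBlaschkeFactor hgβ, mul_div_cancel_left₀ _ hne]
    rw [Finset.prod_insert hβs, hgz, mul_left_comm]
    gcongr

theorem norm_sub_div_norm_add_le_exp {z : ℂ} {β : ℝ} (hz : 0 ≤ z.re) (hβ : 0 ≤ β) :
    ‖z - β‖ / ‖z + β‖ ≤ Real.exp (-(2 * β * z.re / (‖z‖ + β) ^ 2)) := by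
  rcases eq_or_ne ‖z + β‖ 0 with h0 | h0
  · rw [h0, div_zero]
    exact (Real.exp_pos _).le
  have hv : 0 < ‖z + β‖ := (norm_nonneg _).lt_of_ne' h0
  have hvD : ‖z + β‖ ≤ ‖z‖ + β := by simpa [abs_of_nonneg hβ] using norm_add_le z β
  set t := 2 * β * z.re / (‖z‖ + β) ^ 2
  have ht : t ≤ 2 * β * z.re / ‖z + β‖ ^ 2 :=
    div_le_div_of_nonneg_left (by have := mul_nonneg hβ hz; positivity) (by positivity)
      (pow_le_pow_left₀ hv.le hvD 2)
  rw [← pow_le_pow_iff_left₀ (by positivity) (Real.exp_pos _).le two_ne_zero, div_pow,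
    sq_norm_sub_ofReal, ← Real.exp_nat_mul]
  calc (‖z + β‖ ^ 2 - 4 * β * z.re) / ‖z + β‖ ^ 2 = 1 - 2 * (2 * β * z.re / ‖z + β‖ ^ 2) := by
        field_simp; ring
    _ ≤ -((2 : ℕ) * t) + 1 := by push_cast; linarith
    _ ≤ Real.exp ((2 : ℕ) * -t) := by rw [mul_neg]; exact Real.add_one_le_exp _

theorem not_summable_of_tendsto_natCast_mul {a : ℕ → ℝ} {L : ℝ} (hL : 0 < L)
    (ha : Tendsto (fun k : ℕ => k * a k) atTop (𝓝 L)) : ¬ Summable a := by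
  refine fun hs => Real.not_summable_one_div_natCast (summable_of_isBigO_nat hs ?_)
  refine IsBigO.of_bound (2 / L) ?_
  filter_upwards [ha.eventually (lt_mem_nhds (half_lt_self hL)), eventually_ge_atTop 1]
    with k hk hk1
  have hk0 : (0 : ℝ) < k := by exact_mod_cast hk1
  have hak : 0 < a k := pos_of_mul_pos_right ((half_pos hL).trans hk) hk0.le
  rw [Real.norm_of_nonneg (by positivity), Real.norm_of_nonneg hak.le, div_le_iff₀ hk0,
    show 2 / L * a k * k = 2 * (k * a k) / L by ring, le_div_iff₀ hL]
  linarith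

theorem tendsto_prod_norm_sub_div_norm_add_nhds_zero {b : ℕ → ℝ} {d : ℝ} (hb : ∀ k, 0 ≤ b k)
    (hd : 0 < d) (hbd : Tendsto (fun k : ℕ => b k / k) atTop (𝓝 d)) {z : ℂ} (hz : 0 < z.re) :
    Tendsto (fun n => ∏ k ∈ Finset.range n, ‖z - b k‖ / ‖z + b k‖) atTop (𝓝 0) := by
  set a : ℕ → ℝ := fun k => 2 * b k * z.re / (‖z‖ + b k) ^ 2
  -- `a k ~ 2 z.re / (d k)`: the exponents diverge like the harmonic series.
  have ha : ∀ k, 0 ≤ a k := fun k => by have := hb k; positivity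
  have hka : Tendsto (fun k : ℕ => k * a k) atTop (𝓝 (2 * d * z.re / (0 + d) ^ 2)) := by
    have hnum := (hbd.const_mul 2).mul_const z.re
    have hden := ((tendsto_const_div_atTop_nhds_zero_nat ‖z‖).add hbd).pow 2
    refine (hnum.div hden (by positivity)).congr' ?_
    filter_upwards [eventually_ne_atTop 0] with k hk
    have hk : (k : ℝ) ≠ 0 := by exact_mod_cast hk
    show 2 * (b k / k) * z.re / (‖z‖ / k + b k / k) ^ 2 = k * a k
    simp only [a]
    field_simp
  have hsum : Tendsto (fun n => ∑ k ∈ Finset.range n, a k) atTop atTop :=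
    (not_summable_iff_tendsto_nat_atTop_of_nonneg ha).1
      (not_summable_of_tendsto_natCast_mul (by positivity) hka)
  refine squeeze_zero (fun n => Finset.prod_nonneg fun k _ => by positivity) (fun n => ?_)
    (Real.tendsto_exp_atBot.comp (tendsto_neg_atTop_atBot.comp hsum))
  calc ∏ k ∈ Finset.range n, ‖z - b k‖ / ‖z + b k‖
      ≤ ∏ k ∈ Finset.range n, Real.exp (-a k) :=
        Finset.prod_le_prod (fun k _ => by positivity)
          fun k _ => norm_sub_div_norm_add_le_exp hz.le (hb k)
    _ = Real.exp (-∑ k ∈ Finset.range n, a k) := by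
        rw [← Finset.sum_neg_distrib, Real.exp_sum]

theorem stmt14_general (h : ℂ → ℂ)
    (hdiff : DifferentiableOn ℂ h {z : ℂ | 0 ≤ z.re})
    (A C c₁ : ℝ)
    (htype : ∀ z : ℂ, 0 ≤ z.re →
      ‖h z‖ ≤ C * Real.exp (A * ‖z‖))
    (him : ∀ y : ℝ, ‖h (Complex.I * (y : ℂ))‖ ≤ c₁)
    (b : ℕ → ℝ) (hb_mono : StrictMono b) (hb_pos : ∀ k, 0 < b k)
    (hb_density : Tendsto (fun k : ℕ => b k / k) atTop (𝓝 (1 / 2)))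
    (hzero : ∀ k, h ((b k : ℝ) : ℂ) = 0) :
    ∀ z : ℂ, 0 ≤ z.re → h z = 0 := by
  set g : ℂ → ℂ := fun z => cexp (-A * z) • h z
  have hgd : DifferentiableOn ℂ g {z | 0 ≤ z.re} :=
    (by fun_prop : Differentiable ℂ fun w : ℂ => cexp (-A * w)).differentiableOn.smul hdiff
  have hg_le : ∀ z : ℂ, 0 ≤ z.re → ‖g z‖ ≤ c₁ := fun z hz =>
    norm_cexp_neg_mul_smul_le_of_exponential_type hdiff htype him hz
  have h_open : EqOn h 0 {z | 0 < z.re} := by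
    intro z hz
    have hprod : ∀ n, ‖g z‖ ≤ c₁ * ∏ k ∈ Finset.range n, ‖z - b k‖ / ‖z + b k‖ := fun n => by
      rw [← Finset.prod_image (f := fun β : ℝ => ‖z - β‖ / ‖z + β‖) hb_mono.injective.injOn]
      refine norm_le_mul_prod_of_forall_eq_zero _ ?_ hgd hg_le (le_of_lt hz)
      simp only [Finset.mem_image]
      rintro _ ⟨k, -, rfl⟩
      exact ⟨hb_pos k, by simp [g, hzero k]⟩
    have hlim := (tendsto_prod_norm_sub_div_norm_add_nhds_zero (fun k => (hb_pos k).le) one_half_pos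
      hb_density hz).const_mul c₁
    rw [mul_zero] at hlim
    have hgz : g z = 0 := norm_le_zero_iff.1 (ge_of_tendsto' hlim hprod)
    simpa [g, exp_ne_zero] using hgz
  exact fun z hz => h_open.of_subset_closure hdiff.continuousOn continuousOn_const
    (fun w (hw : 0 < w.re) => hw.le) (by rw [closure_setOfPred_lt_re]) hz

/-- classical Carlson-type theorem for zero sets of density 2:
a function holomorphic on {Re z ≥ 0}, of exponential type, bounded on the
imaginary axis, vanishing on a separated strictly increasing sequence
(b_k) of positive reals with b_k/k → 1/2, whose growth indicator on the
imaginary axis satisfies limsup_{|y|→∞} log|h(iy)|/|y| < 2π, vanishes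
identically on {Re z ≥ 0}. -/
theorem stmt14 (h : ℂ → ℂ)
    (hdiff : DifferentiableOn ℂ h {z : ℂ | 0 ≤ z.re})
    (A C c₁ : ℝ)
    (htype : ∀ z : ℂ, 0 ≤ z.re →
      ‖h z‖ ≤ C * Real.exp (A * ‖z‖))
    (him : ∀ y : ℝ, ‖h (Complex.I * (y : ℂ))‖ ≤ c₁)
    (b : ℕ → ℝ) (hb_mono : StrictMono b) (hb_pos : ∀ k, 0 < b k)
    (γ : ℝ) (hγ : 0 < γ) (hb_gap : ∀ k, γ ≤ b (k + 1) - b k)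
    (hb_density : Tendsto (fun k : ℕ => b k / k) atTop (𝓝 (1 / 2)))
    (hindicator :
      Filter.limsup
        (fun y : ℝ => Real.log ‖h (Complex.I * (y : ℂ))‖ / |y|)
        (Filter.atTop ⊔ Filter.atBot) < 2 * Real.pi)
    (hzero : ∀ k, h ((b k : ℝ) : ℂ) = 0) :
    ∀ z : ℂ, 0 ≤ z.re → h z = 0 :=
  stmt14_general h hdiff A C c₁ htype him b hb_mono hb_pos hb_density hzero
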